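/- arXiv:2207.13873 — 3 statements merged into one kernel-verified Lean document; each statement's English description precedes it below -/
import Mathlib

section
/- Let h : [0, ∞) → ℝ be differentiable, let α : ℝ → ℝ be continuous, strictly increasing with α(0) = 0, and let η > 0 be a constant. If h'(t) ≥ -α(h(t) - η) for all t ≥ 0 and h(0) ≥ η, then h(t) ≥ η for all t ≥ 0. -/
theorem stmt_1 (h h' : ℝ → ℝ) (α : ℝ → ℝ) (η : ℝ) (hη : 0 < η)
    (hdiff : ∀ t, 0 ≤ t → HasDerivAt h (h' t) t)
    (hαcont : Continuous α) (hαmono : StrictMono α) (hα0 : α 0 = 0)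
    (hineq : ∀ t, 0 ≤ t → h' t ≥ -α (h t - η))
    (h0 : h 0 ≥ η) :
    ∀ t, 0 ≤ t → h t ≥ η := by
  intro t ht
  by_contra hlt
  push_neg at hlt
  set S : Set ℝ := {s : ℝ | s ∈ Set.Icc 0 t ∧ η ≤ h s} with hS
  have h0S : (0 : ℝ) ∈ S := ⟨⟨le_refl 0, ht⟩, h0⟩
  have hne : S.Nonempty := ⟨0, h0S⟩
  have hbdd : BddAbove S := ⟨t, fun x hx => hx.1.2⟩
  set σ := sSup S with hσ
  have hσmem : σ ∈ Set.Icc 0 t :=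
    ⟨le_csSup hbdd h0S, csSup_le hne (fun x hx => hx.1.2)⟩
  have hσval : η ≤ h σ := by
    obtain ⟨u, hu_mono, hu_tendsto, hu_mem⟩ := exists_seq_tendsto_sSup hne hbdd
    have hcont : ContinuousAt h σ := (hdiff σ hσmem.1).continuousAt
    have : Filter.Tendsto (h ∘ u) Filter.atTop (nhds (h σ)) :=
      hcont.tendsto.comp hu_tendsto
    exact ge_of_tendsto this (Filter.Eventually.of_forall fun n => (hu_mem n).2)
  have hσt : σ < t := lt_of_le_of_ne hσmem.2 (fun e => by rw [e] at hσval; linarith)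
  have hlt' : ∀ x ∈ Set.Ioc σ t, h x < η := by
    intro x hx
    by_contra hge
    push_neg at hge
    have hxS : x ∈ S := ⟨⟨le_trans hσmem.1 hx.1.le, hx.2⟩, hge⟩
    exact absurd (le_csSup hbdd hxS) (not_le.2 hx.1)
  have hmono : MonotoneOn h (Set.Icc σ t) := by
    apply monotoneOn_of_deriv_nonneg (convex_Icc σ t)
    · exact fun x hx =>
        ((hdiff x (le_trans hσmem.1 hx.1)).continuousAt).continuousWithinAt
    · intro x hx
      rw [interior_Icc] at hx
      exact (hdiff x (le_trans hσmem.1 hx.1.le)).differentiableAt.differentiableWithinAt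
    · intro x hx
      rw [interior_Icc] at hx
      have hx0 : 0 ≤ x := le_trans hσmem.1 hx.1.le
      rw [(hdiff x hx0).deriv]
      have hxlt : h x < η := hlt' x ⟨hx.1, hx.2.le⟩
      have hαneg : α (h x - η) < α 0 := hαmono (by linarith)
      rw [hα0] at hαneg
      have := hineq x hx0
      linarith
  have := hmono ⟨le_refl σ, hσmem.2⟩ ⟨hσt.le, le_refl t⟩ hσt.le
  linarith
end

section
/- Let x : [0,∞) → ℝⁿ and θ̂ : [0,∞) → ℝᵖ be differentiable along trajectories of ẋ = f(x) - Δ(x)ᵀθ + g(x)u with true parameter θ, and let h : ℝⁿ × ℝᵖ → ℝ be continuously differentiable. Define the barrier-like function h̄(t) = v(ρ(t))·(h(x(t), θ̂(t)) + η) - (1/(2γ))·‖θ̂(t) - θ‖², with adaptation laws θ̂' = γ·v(ρ)·Δ(x)·∇ₓh and ρ' = -(v(ρ)/v'(ρ))·(1/(h + η))·⟨∇_{θ̂}h, θ̂'⟩, where v is continuously differentiable with v'(ρ) ≠ 0 and h(x,θ̂) + η ≠ 0 along the trajectory. Then h̄'(t) = v(ρ(t))·⟨∇ₓh, f(x) -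 Δ(x)ᵀθ̂ + g(x)u⟩. -/
/-!
The rate `ρ'` is chosen so that `v'(ρ) ρ' (h + η) = -v(ρ) ⟨∇_θ̂ h, θ̂'⟩`, which removes the `θ̂'`-part of the derivative of
`v(ρ) (h + η)` and leaves `v(ρ) ⟨∇ₓh, ẋ⟩`, with `ẋ` written using the true `θ`. Since
`θ̂' = γ v(ρ) Δ ∇ₓh`, the derivative of `(1/2γ) ‖θ̂ - θ‖²` is `v(ρ) ⟨∇ₓh, Δᵀ(θ̂ - θ)⟩`, and
subtracting it turns `Δᵀθ` into `Δᵀθ̂`.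
-/

open Matrix

section

variable {ι κ : Type*} [Fintype ι] [Fintype κ] {t : ℝ}

theorem HasDerivAt.dotProduct {φ ψ : ℝ → ι → ℝ} {φ' ψ' : ι → ℝ}
    (hφ : HasDerivAt φ φ' t) (hψ : HasDerivAt ψ ψ' t) :
    HasDerivAt (fun s => φ s ⬝ᵥ ψ s) (φ' ⬝ᵥ ψ t + φ t ⬝ᵥ ψ') t := by
  unfold _root_.dotProduct
  rw [← Finset.sum_add_distrib]
  exact HasDerivAt.fun_sum fun i _ =>
    (hasDerivAt_pi.mp hφ i).mul (hasDerivAt_pi.mp hψ i)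

theorem HasDerivAt.dotProduct_sub_const_self {φ : ℝ → ι → ℝ} {φ' : ι → ℝ} (c : ι → ℝ)
    (hφ : HasDerivAt φ φ' t) :
    HasDerivAt (fun s => (φ s - c) ⬝ᵥ (φ s - c)) (2 * ((φ t - c) ⬝ᵥ φ')) t := by
  have hφc : HasDerivAt (fun s => φ s - c) φ' t := hφ.sub_const c
  refine (hφc.dotProduct hφc).congr_deriv ?_
  rw [dotProduct_comm φ']
  ring

theorem hasDerivAt_parameterError_of_adaptationLaw {θhat : ℝ → κ → ℝ} {θ : κ → ℝ}
    {A : Matrix κ ι ℝ} {w : ι → ℝ} {γ c : ℝ} (hγ : γ ≠ 0)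
    (hθ : HasDerivAt θhat ((γ * c) • (A *ᵥ w)) t) :
    HasDerivAt (fun s => 1 / (2 * γ) * ((θhat s - θ) ⬝ᵥ (θhat s - θ)))
      (c * (w ⬝ᵥ Aᵀ *ᵥ (θhat t - θ))) t := by
  refine ((hθ.dotProduct_sub_const_self θ).const_mul (1 / (2 * γ))).congr_deriv ?_
  rw [dotProduct_smul, smul_eq_mul, dotProduct_comm, dotProduct_mulVec, vecMul_transpose,
    dotProduct_comm]
  field_simp

end

theorem hasDerivAt_comp_mul_of_compensatingRate {v ρ H : ℝ → ℝ} {dv ρ' a b t : ℝ}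
    (hv : HasDerivAt v dv (ρ t)) (hdv : dv ≠ 0) (hρ : HasDerivAt ρ ρ' t)
    (hH : HasDerivAt H (a + b) t) (hH0 : H t ≠ 0)
    (hρ' : ρ' = -(v (ρ t) / dv) * (1 / H t) * b) :
    HasDerivAt (fun s => v (ρ s) * H s) (v (ρ t) * a) t := by
  refine ((hv.comp t hρ).mul hH).congr_deriv ?_
  rw [hρ', Function.comp_apply]
  field_simp
  ring

theorem stmt_7_general {n m p : ℕ}
    (x : ℝ → (Fin n → ℝ)) (θhat : ℝ → (Fin p → ℝ)) (θ : Fin p → ℝ)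
    (f : (Fin n → ℝ) → (Fin n → ℝ))
    (Δ : (Fin n → ℝ) → Matrix (Fin p) (Fin n) ℝ)
    (g : (Fin n → ℝ) → Matrix (Fin n) (Fin m) ℝ)
    (u : ℝ → (Fin m → ℝ))
    (h : (Fin n → ℝ) → (Fin p → ℝ) → ℝ)
    (gradx : ℝ → (Fin n → ℝ)) (gradθ : ℝ → (Fin p → ℝ))
    (v v' ρ ρ' : ℝ → ℝ) (γ η : ℝ) (hγ : 0 < γ)
    -- direct adaptation law for θ̂
    (hθ : ∀ t, HasDerivAt θhat ((γ * v (ρ t)) • (Δ (x t) *ᵥ gradx t)) t)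
    -- scaling function derivative
    (hv : ∀ r, HasDerivAt v (v' r) r) (hv' : ∀ r, v' r ≠ 0)
    (hnz : ∀ t, h (x t) (θhat t) + η ≠ 0)
    -- adaptation law for ρ
    (hρval : ∀ t, ρ' t =
      -(v (ρ t) / v' (ρ t)) * (1 / (h (x t) (θhat t) + η)) *
        dotProduct (gradθ t) ((γ * v (ρ t)) • (Δ (x t) *ᵥ gradx t)))
    (hρ : ∀ t, HasDerivAt ρ (ρ' t) t)
    -- chain rule for h along the trajectory with gradients gradx, gradθ
    (hchain : ∀ t, HasDerivAt (fun s => h (x s) (θhat s))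
      (dotProduct (gradx t) (f (x t) - (Δ (x t))ᵀ *ᵥ θ + g (x t) *ᵥ u t)
        + dotProduct (gradθ t) ((γ * v (ρ t)) • (Δ (x t) *ᵥ gradx t))) t) :
    ∀ t, HasDerivAt
      (fun s => v (ρ s) * (h (x s) (θhat s) + η)
        - (1 / (2 * γ)) * dotProduct (θhat s - θ) (θhat s - θ))
      (v (ρ t) * dotProduct (gradx t)
        (f (x t) - (Δ (x t))ᵀ *ᵥ θhat t + g (x t) *ᵥ u t)) t := by
  intro t
  have hscaled := hasDerivAt_comp_mul_of_compensatingRate (hv (ρ t)) (hv' (ρ t)) (hρ t)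
    ((hchain t).add_const η) (hnz t) (hρval t)
  have herror := hasDerivAt_parameterError_of_adaptationLaw (θ := θ) hγ.ne' (hθ t)
  refine (hscaled.sub herror).congr_deriv ?_
  rw [← mul_sub, ← dotProduct_sub, mulVec_sub]
  congr 2
  abel

theorem stmt_7 {n m p : ℕ}
    (x : ℝ → (Fin n → ℝ)) (θhat : ℝ → (Fin p → ℝ)) (θ : Fin p → ℝ)
    (f : (Fin n → ℝ) → (Fin n → ℝ))
    (Δ : (Fin n → ℝ) → Matrix (Fin p) (Fin n) ℝ)
    (g : (Fin n → ℝ) → Matrix (Fin n) (Fin m) ℝ)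
    (u : ℝ → (Fin m → ℝ))
    (h : (Fin n → ℝ) → (Fin p → ℝ) → ℝ)
    (gradx : ℝ → (Fin n → ℝ)) (gradθ : ℝ → (Fin p → ℝ))
    (v v' ρ ρ' : ℝ → ℝ) (γ η : ℝ) (hγ : 0 < γ) (hη : 0 < η)
    -- system dynamics
    (hx : ∀ t, HasDerivAt x (f (x t) - (Δ (x t))ᵀ *ᵥ θ + g (x t) *ᵥ u t) t)
    -- direct adaptation law for θ̂
    (hθ : ∀ t, HasDerivAt θhat ((γ * v (ρ t)) • (Δ (x t) *ᵥ gradx t)) t)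
    -- scaling function derivative
    (hv : ∀ r, HasDerivAt v (v' r) r) (hv' : ∀ r, v' r ≠ 0)
    (hnz : ∀ t, h (x t) (θhat t) + η ≠ 0)
    -- adaptation law for ρ
    (hρval : ∀ t, ρ' t =
      -(v (ρ t) / v' (ρ t)) * (1 / (h (x t) (θhat t) + η)) *
        dotProduct (gradθ t) ((γ * v (ρ t)) • (Δ (x t) *ᵥ gradx t)))
    (hρ : ∀ t, HasDerivAt ρ (ρ' t) t)
    -- chain rule for h along the trajectory with gradients gradx, gradθ
    (hchain : ∀ t, HasDerivAt (fun s => h (x s) (θhat s))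
      (dotProduct (gradx t) (f (x t) - (Δ (x t))ᵀ *ᵥ θ + g (x t) *ᵥ u t)
        + dotProduct (gradθ t) ((γ * v (ρ t)) • (Δ (x t) *ᵥ gradx t))) t) :
    ∀ t, HasDerivAt
      (fun s => v (ρ s) * (h (x s) (θhat s) + η)
        - (1 / (2 * γ)) * dotProduct (θhat s - θ) (θhat s - θ))
      (v (ρ t) * dotProduct (gradx t)
        (f (x t) - (Δ (x t))ᵀ *ᵥ θhat t + g (x t) *ᵥ u t)) t :=
  stmt_7_general x θhat θ f Δ g u h gradx gradθ v v' ρ ρ' γ η hγ hθ hv hv' hnz hρval hρ hchain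
end

section
/- Let λ > 0 and h : [0,∞) → ℝ be (r+1)-times differentiable. Define the operator L(h) = h' + λ·h. If Lʳ(h)(t) ≥ 0 for all t ≥ 0 and Lⁱ(h)(0) ≥ 0 for all i = 0, 1, ..., r-1, then h(t) ≥ 0 for all t ≥ 0. -/
/-!
Since `(exp (λ t) f t)' = exp (λ t) (f' t + λ f t)`, a function `f` with `f' + λ f ≥ 0` on `[0, ∞)`
and `f 0 ≥ 0` stays nonnegative: `exp (λ t) f t` is monotone there. Applying this to
`f = Lʳ⁻¹ h, Lʳ⁻² h, …, h` in turn (induction on `r`) gives the theorem.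
-/

open Set

theorem nonneg_of_deriv_add_mul_nonneg {f : ℝ → ℝ} {lam : ℝ} (hf : Differentiable ℝ f)
    (hL : ∀ t, 0 ≤ t → 0 ≤ deriv f t + lam * f t) (h0 : 0 ≤ f 0) :
    ∀ t, 0 ≤ t → 0 ≤ f t := by
  set g : ℝ → ℝ := fun t => Real.exp (lam * t) * f t
  have hg : ∀ t, HasDerivAt g (Real.exp (lam * t) * (deriv f t + lam * f t)) t := fun t => by
    have hexp : HasDerivAt (fun t => Real.exp (lam * t)) (Real.exp (lam * t) * lam) t := by
      simpa using ((hasDerivAt_id t).const_mul lam).exp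
    exact (hexp.fun_mul (hf t).hasDerivAt).congr_deriv (by ring)
  have hmono : MonotoneOn g (Ici 0) := by
    refine monotoneOn_of_deriv_nonneg (convex_Ici 0)
      (fun t _ => (hg t).continuousAt.continuousWithinAt)
      (fun t _ => (hg t).differentiableAt.differentiableWithinAt) fun t ht => ?_
    rw [interior_Ici, mem_Ioi] at ht
    rw [(hg t).deriv]
    exact mul_nonneg (Real.exp_nonneg _) (hL t ht.le)
  intro t ht
  have hgt : 0 ≤ g t := by
    have hmt : g 0 ≤ g t := hmono self_mem_Ici ht ht
    simp only [g, mul_zero, Real.exp_zero, one_mul] at hmt ⊢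
    exact h0.trans hmt
  exact nonneg_of_mul_nonneg_right hgt (Real.exp_pos _)

theorem ContDiff.deriv_add_const_mul {f : ℝ → ℝ} {n : WithTop ℕ∞} (hf : ContDiff ℝ (n + 1) f)
    (lam : ℝ) : ContDiff ℝ n fun t => deriv f t + lam * f t :=
  hf.deriv'.add (contDiff_const.mul (hf.of_le le_self_add))

theorem nonneg_of_iterate_deriv_add_mul_nonneg (lam : ℝ) (r : ℕ) {h : ℝ → ℝ}
    (hh : ContDiff ℝ (r + 1) h)
    (hs : ∀ t, 0 ≤ t → 0 ≤ (fun f t => deriv f t + lam * f t)^[r] h t)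
    (h0 : ∀ i < r, 0 ≤ (fun f t => deriv f t + lam * f t)^[i] h 0) :
    ∀ t, 0 ≤ t → 0 ≤ h t := by
  induction r generalizing h with
  | zero => simpa using hs
  | succ r ih =>
    have hLh := ih (by exact_mod_cast hh.deriv_add_const_mul lam) (by simpa using hs)
      fun i hi => by simpa using h0 (i + 1) (by omega)
    exact nonneg_of_deriv_add_mul_nonneg (hh.differentiable (by simp)) hLh
      (by simpa using h0 0 (by omega))

theorem stmt_14_general (h : ℝ → ℝ) (lam : ℝ) (r : ℕ)
    (hsmooth : ContDiff ℝ (r + 1) h)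
    (L : (ℝ → ℝ) → (ℝ → ℝ))
    (hL : L = fun f => fun t => deriv f t + lam * f t)
    (hs : ∀ t, 0 ≤ t → (L^[r] h) t ≥ 0)
    (h0 : ∀ i < r, (L^[i] h) 0 ≥ 0) :
    ∀ t, 0 ≤ t → h t ≥ 0 := by
  subst hL
  exact nonneg_of_iterate_deriv_add_mul_nonneg lam r hsmooth hs h0

theorem stmt_14 (h : ℝ → ℝ) (lam : ℝ) (hlam : 0 < lam) (r : ℕ)
    (hsmooth : ContDiff ℝ (r + 1) h)
    (L : (ℝ → ℝ) → (ℝ → ℝ))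
    (hL : L = fun f => fun t => deriv f t + lam * f t)
    (hs : ∀ t, 0 ≤ t → (L^[r] h) t ≥ 0)
    (h0 : ∀ i < r, (L^[i] h) 0 ≥ 0) :
    ∀ t, 0 ≤ t → h t ≥ 0 :=
  stmt_14_general h lam r hsmooth L hL hs h0
end
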